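/- Suppose x' = A(t)x admits a strong exponential dichotomy with respect to a family of norms ‖·‖_t satisfying ‖x‖ ≤ ‖x‖_t ≤ Ce^{ε|t|}‖x‖, and let Y_∞ and the bounded invertible operator 𝔸 be as defined. If for some real μ > 0 the evolution family T_μ(t,s) := μ^{−(t−s)}T(t,s) admits a strong exponential dichotomy with respect to the norms ‖·‖_t, then μ does not belong to the spectrum of 𝔸 (as a bounded operator on the real Banach space Y_∞), i.e. μ·Id − 𝔸 is invertible. -/

import Mathlib

/- STATEMENT 3: If for some μ > 0 the rescaled evolution family
T_μ(t,s) = μ^{-(t-s)} T(t,s) admits a strong exponential dichotomy with respect to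
the norms ‖·‖_t, then μ does not belong to the spectrum of the discretized operator
𝔸 on Y_∞, i.e. μ·Id − 𝔸 is invertible. -/

noncomputable section

/-- `ℝ^d` -/
abbrev Ed (d : ℕ) := Fin d → ℝ

/-- A family of norms on `ℝ^d` indexed by `ℤ`, each bounded below by the ambient norm
(so each seminorm is in fact a norm). -/
structure NormFamily (d : ℕ) where
  N : ℤ → Seminorm ℝ (Ed d)
  lower : ∀ (n : ℤ) (x : Ed d), ‖x‖ ≤ N n x

variable {d : ℕ}

/-- The submodule of two-sided sequences with bounded weighted norms. -/
def YinfSubmodule (𝒩 : NormFamily d) : Submodule ℝ (ℤ → Ed d) where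
  carrier := {x | ∃ C : ℝ, ∀ n : ℤ, 𝒩.N n (x n) ≤ C}
  add_mem' := by
    rintro x y ⟨Cx, hx⟩ ⟨Cy, hy⟩
    exact ⟨Cx + Cy, fun n => le_trans (map_add_le_add _ _ _) (add_le_add (hx n) (hy n))⟩
  zero_mem' := ⟨0, fun n => by simp⟩
  smul_mem' := by
    rintro c x ⟨Cx, hx⟩
    refine ⟨‖c‖ * Cx, fun n => ?_⟩
    rw [Pi.smul_apply, map_smul_eq_mul]
    exact mul_le_mul_of_nonneg_left (hx n) (norm_nonneg c)

/-- The Banach space `Y_∞` of sequences bounded with respect to the family of norms,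
equipped with the norm `‖x‖ = sup_n ‖x_n‖_n`. -/
def Yinf (𝒩 : NormFamily d) : Type := ↥(YinfSubmodule 𝒩)

instance (𝒩 : NormFamily d) : AddCommGroup (Yinf 𝒩) :=
  inferInstanceAs (AddCommGroup (YinfSubmodule 𝒩))

instance (𝒩 : NormFamily d) : Module ℝ (Yinf 𝒩) :=
  inferInstanceAs (Module ℝ (YinfSubmodule 𝒩))

namespace Yinf

variable {𝒩 : NormFamily d}

/-- The underlying sequence. -/
def seq (x : Yinf 𝒩) : ℤ → Ed d := x.1

lemma bddAbove (x : Yinf 𝒩) : BddAbove (Set.range fun n => 𝒩.N n (x.seq n)) := by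
  obtain ⟨C, hC⟩ := x.2
  exact ⟨C, by rintro _ ⟨n, rfl⟩; exact hC n⟩

@[simp] lemma seq_add (x y : Yinf 𝒩) (n : ℤ) : (x + y).seq n = x.seq n + y.seq n := rfl
@[simp] lemma seq_neg (x : Yinf 𝒩) (n : ℤ) : (-x).seq n = -(x.seq n) := rfl
@[simp] lemma seq_smul (c : ℝ) (x : Yinf 𝒩) (n : ℤ) : (c • x).seq n = c • (x.seq n) := rfl
@[simp] lemma seq_zero (n : ℤ) : (0 : Yinf 𝒩).seq n = 0 := rfl

instance : NormedAddCommGroup (Yinf 𝒩) :=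
  AddGroupNorm.toNormedAddCommGroup
    { toFun := fun x => ⨆ n : ℤ, 𝒩.N n (x.seq n)
      map_zero' := by simp
      add_le' := by
        intro x y
        refine ciSup_le fun n => ?_
        calc 𝒩.N n ((x + y).seq n) = 𝒩.N n (x.seq n + y.seq n) := by rw [seq_add]
          _ ≤ 𝒩.N n (x.seq n) + 𝒩.N n (y.seq n) := map_add_le_add _ _ _
          _ ≤ _ := add_le_add (le_ciSup x.bddAbove n) (le_ciSup y.bddAbove n)
      neg' := by
        intro x
        refine iSup_congr fun n => ?_
        rw [seq_neg, map_neg_eq_map]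
      eq_zero_of_map_eq_zero' := by
        intro x hx
        have h0 : ∀ n : ℤ, x.seq n = 0 := by
          intro n
          have h1 : 𝒩.N n (x.seq n) ≤ 0 := hx ▸ le_ciSup x.bddAbove n
          have h2 : ‖x.seq n‖ ≤ 0 := le_trans (𝒩.lower n _) h1
          exact norm_le_zero_iff.mp h2
        apply Subtype.ext
        funext n
        exact h0 n }

lemma norm_def (x : Yinf 𝒩) : ‖x‖ = ⨆ n : ℤ, 𝒩.N n (x.seq n) := rfl

instance : NormedSpace ℝ (Yinf 𝒩) where
  norm_smul_le c x := by
    rw [norm_def, norm_def]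
    rw [Real.mul_iSup_of_nonneg (norm_nonneg c)]
    refine ciSup_le fun n => ?_
    rw [seq_smul, map_smul_eq_mul]
    have hb : BddAbove (Set.range fun m : ℤ => ‖c‖ * 𝒩.N m (x.seq m)) := by
      obtain ⟨C, hC⟩ := x.bddAbove
      refine ⟨‖c‖ * C, ?_⟩
      rintro _ ⟨m, rfl⟩
      exact mul_le_mul_of_nonneg_left (hC ⟨m, rfl⟩) (norm_nonneg c)
    exact le_ciSup hb n

end Yinf

/-- A (possibly rescaled) evolution family `S` admits a strong exponential dichotomy
with respect to the family of norms `N t`. -/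
def SEDfam (d : ℕ) (S : ℝ → ℝ → Ed d → Ed d) (N : ℝ → Seminorm ℝ (Ed d)) : Prop :=
  ∃ (Q : ℝ → Ed d →L[ℝ] Ed d) (K lam lamBar : ℝ),
    0 < K ∧ 0 < lam ∧ lam ≤ lamBar ∧
    (∀ t, (Q t).comp (Q t) = Q t) ∧
    (∀ t s x, S t s (Q s x) = Q t (S t s x)) ∧
    (∀ t s x, s ≤ t → N t (S t s (Q s x)) ≤ K * Real.exp (-lam * (t - s)) * N s x) ∧
    (∀ t s x, t ≤ s → N t (S t s (x - Q s x)) ≤ K * Real.exp (-lam * (s - t)) * N s x) ∧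
    (∀ t s x, N t (S t s x) ≤ K * Real.exp (lamBar * |t - s|) * N s x)


/-! Dividing by `μ`, `μ·Id − 𝔸 = μ (Id − 𝕍)` where `(𝕍 x)ₙ = V(n, n-1) x_{n-1}` for the
integer-time cocycle `V(n, k) = μ^{k-n} T(n, k)`, which by hypothesis has an exponential
dichotomy with projections `P`. Its Green function, `V(n, k) P(k)` for `k ≤ n` and
`-V(n, k) (Id - P(k))` for `k > n`, decays like `e^{-λ|n-k|}`, so summing against it is a bounded
operator on `Y_∞`, and it is a right inverse of `Id − 𝕍`. Conversely a bounded solution of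
`xₙ = V(n, n-1) x_{n-1}` has both dichotomy components bounded by `K e^{-λ j} ‖x‖` for every `j`,
so it vanishes and `Id − 𝕍` is injective. -/

open Filter Topology

lemma Seminorm.continuous_of_finiteDimensional {E : Type*} [NormedAddCommGroup E]
    [NormedSpace ℝ E] [FiniteDimensional ℝ E] (p : Seminorm ℝ E) : Continuous p :=
  continuousOn_univ.mp (p.convexOn.continuousOn isOpen_univ)

lemma Seminorm.map_tsum_le {𝕜 E ι : Type*} [SeminormedRing 𝕜] [AddCommGroup E] [SMul 𝕜 E]
    [TopologicalSpace E] {p : Seminorm 𝕜 E} (hp : Continuous p) {f : ι → E} {b : ι → ℝ} (hf : Summable f)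
    (hb : Summable b) (hfb : ∀ i, p (f i) ≤ b i) : p (∑' i, f i) ≤ ∑' i, b i :=
  le_of_tendsto_of_tendsto' ((hp.tendsto _).comp hf.hasSum) hb.hasSum fun s =>
    (Finset.le_sum_of_subadditive p (map_zero p).le (map_add_le_add p) s f).trans
      (Finset.sum_le_sum fun i _ => hfb i)

lemma summable_exp_neg_mul_abs_intCast {lam : ℝ} (hlam : 0 < lam) :
    Summable fun j : ℤ => Real.exp (-lam * |(j : ℝ)|) := by
  have h : Summable fun n : ℕ => Real.exp (n * -lam) :=
    Real.summable_exp_nat_mul_iff.mpr (neg_lt_zero.mpr hlam)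
  refine Summable.of_nat_of_neg (h.congr fun n => ?_) (h.congr fun n => ?_) <;>
    simp [mul_comm]

lemma nonpos_of_forall_le_mul_exp_neg {a c lam : ℝ} (hlam : 0 < lam)
    (h : ∀ j : ℕ, a ≤ c * Real.exp (-lam * j)) : a ≤ 0 := by
  have hdecay : Tendsto (fun j : ℕ => c * Real.exp (-lam * j)) atTop (𝓝 (c * 0)) :=
    (Real.tendsto_exp_atBot.comp
      (tendsto_natCast_atTop_atTop.const_mul_atTop_of_neg (neg_lt_zero.mpr hlam))).const_mul c
  simpa using ge_of_tendsto' hdecay h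

section DiscreteDichotomy

variable {E : Type*} [NormedAddCommGroup E] [NormedSpace ℝ E]

structure IsDiscreteEvolution (V : ℤ → ℤ → E →L[ℝ] E) : Prop where
  apply_self : ∀ n x, V n n x = x
  apply_apply : ∀ n m k x, V n m (V m k x) = V n k x

structure HasDiscreteDichotomy (p : ℤ → Seminorm ℝ E) (V : ℤ → ℤ → E →L[ℝ] E)
    (P : ℤ → E →L[ℝ] E) (K lam : ℝ) : Prop where
  K_nonneg : 0 ≤ K
  lam_pos : 0 < lam
  map_proj : ∀ n k x, V n k (P k x) = P n (V n k x)
  stable : ∀ n k x, k ≤ n →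
    p n (V n k (P k x)) ≤ K * Real.exp (-lam * ((n - k : ℤ) : ℝ)) * p k x
  unstable : ∀ n k x, n ≤ k →
    p n (V n k (x - P k x)) ≤ K * Real.exp (-lam * ((k - n : ℤ) : ℝ)) * p k x

def greenFunction (V : ℤ → ℤ → E →L[ℝ] E) (P : ℤ → E →L[ℝ] E) (n k : ℤ) : E →L[ℝ] E :=
  if k ≤ n then (V n k).comp (P k) else -(V n k).comp (1 - P k)

variable {V : ℤ → ℤ → E →L[ℝ] E} {P : ℤ → E →L[ℝ] E}

lemma IsDiscreteEvolution.greenFunction_sub_apply (hV : IsDiscreteEvolution V) (n k : ℤ)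
    (v : E) :
    greenFunction V P n k v - V n (n - 1) (greenFunction V P (n - 1) k v) =
      if k = n then v else 0 := by
  rcases lt_trichotomy k n with hkn | rfl | hnk
  · simp [greenFunction, hkn.le, show k ≤ n - 1 by omega, hkn.ne, hV.apply_apply]
  · simp [greenFunction, hV.apply_apply, hV.apply_self]
  · simp [greenFunction, show ¬k ≤ n by omega, show ¬k ≤ n - 1 by omega, hnk.ne',
      hV.apply_apply]

lemma HasDiscreteDichotomy.greenFunction_le {p : ℤ → Seminorm ℝ E} {K lam : ℝ}
    (h : HasDiscreteDichotomy p V P K lam) (n k : ℤ) (x : E) :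
    p n (greenFunction V P n k x) ≤ K * Real.exp (-lam * |((n - k : ℤ) : ℝ)|) * p k x := by
  by_cases hkn : k ≤ n
  · have habs : |((n - k : ℤ) : ℝ)| = ((n - k : ℤ) : ℝ) :=
      abs_of_nonneg (by exact_mod_cast by omega)
    rw [habs]
    simpa only [greenFunction, if_pos hkn, ContinuousLinearMap.comp_apply] using
      h.stable n k x hkn
  · have habs : |((n - k : ℤ) : ℝ)| = ((k - n : ℤ) : ℝ) := by
      rw [abs_of_neg (by exact_mod_cast by omega)]; push_cast; ring
    rw [habs]
    simpa only [greenFunction, if_neg hkn, neg_apply, map_neg_eq_map,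
      ContinuousLinearMap.comp_apply, sub_apply, one_apply_eq_self] using
      h.unstable n k x (by omega)

lemma IsDiscreteEvolution.eq_apply_of_forall_eq_apply (hV : IsDiscreteEvolution V)
    {x : ℤ → E} (hx : ∀ n, x n = V n (n - 1) (x (n - 1))) (n k : ℤ) : x n = V n k (x k) := by
  have forward (a b : ℤ) (hba : b ≤ a) : x a = V a b (x b) := by
    induction a, hba using Int.leInduction with
    | base => rw [hV.apply_self]
    | succ a _ ih => rw [hx, add_sub_cancel_right, ih, hV.apply_apply]
  rcases le_total k n with hkn | hnk
  · exact forward n k hkn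
  · rw [forward k n hnk, hV.apply_apply, hV.apply_self]

lemma HasDiscreteDichotomy.seminorm_eq_zero_of_bounded_orbit {p : ℤ → Seminorm ℝ E}
    {K lam M : ℝ} (h : HasDiscreteDichotomy p V P K lam) (hV : IsDiscreteEvolution V)
    {x : ℤ → E} (hx : ∀ n, x n = V n (n - 1) (x (n - 1))) (hM : ∀ n, p n (x n) ≤ M) (n : ℤ) :
    p n (x n) = 0 := by
  have horbit := hV.eq_apply_of_forall_eq_apply hx
  refine le_antisymm (nonpos_of_forall_le_mul_exp_neg (c := 2 * K * M) h.lam_pos fun j => ?_)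
    (apply_nonneg _ _)
  have hstable : p n (P n (x n)) ≤ K * Real.exp (-lam * j) * M := by
    rw [horbit n (n - j), ← h.map_proj]
    calc _ ≤ K * Real.exp (-lam * ((n - (n - j) : ℤ) : ℝ)) * p (n - j) (x (n - j)) :=
          h.stable _ _ _ (by omega)
      _ ≤ K * Real.exp (-lam * j) * M := by
          rw [sub_sub_cancel, Int.cast_natCast]
          exact mul_le_mul_of_nonneg_left (hM _) (mul_nonneg h.K_nonneg (Real.exp_nonneg _))
  have hunstable : p n (x n - P n (x n)) ≤ K * Real.exp (-lam * j) * M := by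
    rw [horbit n (n + j), ← h.map_proj, ← map_sub]
    calc _ ≤ K * Real.exp (-lam * ((n + j - n : ℤ) : ℝ)) * p (n + j) (x (n + j)) :=
          h.unstable _ _ _ (by omega)
      _ ≤ K * Real.exp (-lam * j) * M := by
          rw [add_sub_cancel_left, Int.cast_natCast]
          exact mul_le_mul_of_nonneg_left (hM _) (mul_nonneg h.K_nonneg (Real.exp_nonneg _))
  calc p n (x n) = p n (P n (x n) + (x n - P n (x n))) := by rw [add_sub_cancel]
    _ ≤ p n (P n (x n)) + p n (x n - P n (x n)) := map_add_le_add _ _ _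
    _ ≤ 2 * K * M * Real.exp (-lam * j) := by linarith

end DiscreteDichotomy

namespace Yinf

variable {d : ℕ} {𝒩 : NormFamily d}

@[simp] lemma seq_sub (x y : Yinf 𝒩) (n : ℤ) : (x - y).seq n = x.seq n - y.seq n := rfl

lemma ext {x y : Yinf 𝒩} (h : ∀ n, x.seq n = y.seq n) : x = y :=
  Subtype.ext (funext h)

lemma seminorm_seq_le_norm (x : Yinf 𝒩) (n : ℤ) : 𝒩.N n (x.seq n) ≤ ‖x‖ :=
  le_ciSup x.bddAbove n

section KernelOperator

variable {G : ℤ → ℤ → Ed d →L[ℝ] Ed d} {w : ℤ → ℝ}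

lemma seminorm_kernel_apply_le (hw₀ : 0 ≤ w)
    (hG : ∀ n k x, 𝒩.N n (G n k x) ≤ w (n - k) * 𝒩.N k x) (y : Yinf 𝒩) (n k : ℤ) :
    𝒩.N n (G n k (y.seq k)) ≤ w (n - k) * ‖y‖ :=
  (hG _ _ _).trans (mul_le_mul_of_nonneg_left (y.seminorm_seq_le_norm k) (hw₀ _))

lemma summable_kernel_apply (hw : Summable w) (hw₀ : 0 ≤ w)
    (hG : ∀ n k x, 𝒩.N n (G n k x) ≤ w (n - k) * 𝒩.N k x) (y : Yinf 𝒩) (n : ℤ) :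
    Summable fun k => G n k (y.seq k) :=
  Summable.of_norm_bounded (((Equiv.subLeft n).summable_iff.mpr hw).mul_right ‖y‖) fun k =>
    (𝒩.lower _ _).trans (seminorm_kernel_apply_le hw₀ hG y n k)

lemma seminorm_tsum_kernel_apply_le (hw : Summable w) (hw₀ : 0 ≤ w)
    (hG : ∀ n k x, 𝒩.N n (G n k x) ≤ w (n - k) * 𝒩.N k x) (y : Yinf 𝒩) (n : ℤ) :
    𝒩.N n (∑' k, G n k (y.seq k)) ≤ (∑' j, w j) * ‖y‖ := by
  have hshift : ∑' k, w (n - k) = ∑' j, w j := (Equiv.subLeft n).tsum_eq w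
  calc 𝒩.N n (∑' k, G n k (y.seq k)) ≤ ∑' k, w (n - k) * ‖y‖ :=
        Seminorm.map_tsum_le (𝒩.N n).continuous_of_finiteDimensional
          (summable_kernel_apply hw hw₀ hG y n)
          (((Equiv.subLeft n).summable_iff.mpr hw).mul_right ‖y‖)
          (seminorm_kernel_apply_le hw₀ hG y n)
    _ = (∑' j, w j) * ‖y‖ := by rw [tsum_mul_right, hshift]

def kernelOp (G : ℤ → ℤ → Ed d →L[ℝ] Ed d) (hw : Summable w) (hw₀ : 0 ≤ w)
    (hG : ∀ n k x, 𝒩.N n (G n k x) ≤ w (n - k) * 𝒩.N k x) : Yinf 𝒩 →L[ℝ] Yinf 𝒩 :=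
  LinearMap.mkContinuous
    { toFun := fun y => ⟨fun n => ∑' k, G n k (y.seq k),
        (∑' j, w j) * ‖y‖, seminorm_tsum_kernel_apply_le hw hw₀ hG y⟩
      map_add' := fun y z => Yinf.ext fun n => by
        simp only [seq_add, map_add]
        exact (summable_kernel_apply hw hw₀ hG y n).tsum_add
          (summable_kernel_apply hw hw₀ hG z n)
      map_smul' := fun c y => Yinf.ext fun n => by
        simp only [seq_smul, map_smul, RingHom.id_apply]
        exact (summable_kernel_apply hw hw₀ hG y n).tsum_const_smul c }
    (∑' j, w j) fun y => ciSup_le (seminorm_tsum_kernel_apply_le hw hw₀ hG y)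

lemma kernelOp_seq (hw : Summable w) (hw₀ : 0 ≤ w)
    (hG : ∀ n k x, 𝒩.N n (G n k x) ≤ w (n - k) * 𝒩.N k x) (y : Yinf 𝒩) (n : ℤ) :
    (kernelOp G hw hw₀ hG y).seq n = ∑' k, G n k (y.seq k) :=
  rfl

end KernelOperator

end Yinf

lemma ContinuousLinearMap.isUnit_of_rightInverse_of_injective {S F : Type*} [Semiring S]
    [TopologicalSpace F] [AddCommMonoid F] [Module S F] {B R : F →L[S] F} (hBR : ∀ y, B (R y) = y)
    (hB : Function.Injective B) : IsUnit B :=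
  ⟨⟨B, R, ext hBR, ext fun x => hB (hBR (B x))⟩, rfl⟩

theorem isUnit_one_sub_of_hasDiscreteDichotomy {d : ℕ} {𝒩 : NormFamily d}
    {V : ℤ → ℤ → Ed d →L[ℝ] Ed d} {P : ℤ → Ed d →L[ℝ] Ed d} {K lam : ℝ}
    (hV : IsDiscreteEvolution V) (hdich : HasDiscreteDichotomy 𝒩.N V P K lam)
    (𝕍 : Yinf 𝒩 →L[ℝ] Yinf 𝒩) (h𝕍 : ∀ x n, (𝕍 x).seq n = V n (n - 1) (x.seq (n - 1))) :
    IsUnit (1 - 𝕍) := by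
  set w : ℤ → ℝ := fun j => K * Real.exp (-lam * |(j : ℝ)|)
  have hw : Summable w := (summable_exp_neg_mul_abs_intCast hdich.lam_pos).mul_left K
  have hw₀ : 0 ≤ w := fun j => mul_nonneg hdich.K_nonneg (Real.exp_nonneg _)
  set R := Yinf.kernelOp (greenFunction V P) hw hw₀ hdich.greenFunction_le
  have hsum := Yinf.summable_kernel_apply hw hw₀ hdich.greenFunction_le
  refine ContinuousLinearMap.isUnit_of_rightInverse_of_injective (R := R) (fun y => ?_) ?_
  · refine Yinf.ext fun n => ?_
    simp only [sub_apply, one_apply_eq_self, Yinf.seq_sub, h𝕍, R, Yinf.kernelOp_seq]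
    rw [ContinuousLinearMap.map_tsum _ (hsum y _), ← (hsum y n).tsum_sub ((hsum y _).mapL _)]
    simp_rw [hV.greenFunction_sub_apply]
    exact tsum_ite_eq n y.seq
  · refine (injective_iff_map_eq_zero (1 - 𝕍)).mpr fun x hx => Yinf.ext fun n => ?_
    have horbit (n : ℤ) : x.seq n = V n (n - 1) (x.seq (n - 1)) := by
      simpa [sub_eq_zero, h𝕍] using congrArg (Yinf.seq · n) hx
    have hzero := hdich.seminorm_eq_zero_of_bounded_orbit hV horbit x.seminorm_seq_le_norm n
    simpa using (𝒩.lower n (x.seq n)).trans hzero.le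

def rescaledEvolution {E : Type*} [NormedAddCommGroup E] [NormedSpace ℝ E] (μ : ℝ)
    (T : ℝ → ℝ → E →L[ℝ] E) (n k : ℤ) : E →L[ℝ] E :=
  (μ ^ (k - n)) • T n k

lemma isDiscreteEvolution_rescaledEvolution {E : Type*} [NormedAddCommGroup E]
    [NormedSpace ℝ E] {μ : ℝ} (hμ : μ ≠ 0) {T : ℝ → ℝ → E →L[ℝ] E}
    (hT_id : ∀ t, T t t = ContinuousLinearMap.id ℝ E)
    (hT_comp : ∀ t s r, (T t s).comp (T s r) = T t r) :
    IsDiscreteEvolution (rescaledEvolution μ T) where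
  apply_self n x := by simp [rescaledEvolution, hT_id]
  apply_apply n m k x := by
    simp only [rescaledEvolution, smul_apply, map_smul, smul_smul, ← zpow_add₀ hμ,
      ← ContinuousLinearMap.comp_apply, hT_comp]
    ring_nf

lemma SEDfam.hasDiscreteDichotomy_rescaledEvolution {d : ℕ} {μ : ℝ}
    {T : ℝ → ℝ → Ed d →L[ℝ] Ed d} {N : ℝ → Seminorm ℝ (Ed d)}
    (h : SEDfam d (fun t s x => Real.rpow μ (s - t) • T t s x) N) :
    ∃ P K lam, HasDiscreteDichotomy (fun n : ℤ => N n) (rescaledEvolution μ T) P K lam := by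
  obtain ⟨Q, K, lam, -, hK, hlam, -, -, hQ, hstable, hunstable, -⟩ := h
  have hzpow (n k : ℤ) : μ ^ ((k : ℝ) - n) = μ ^ (k - n) := by
    rw [← Real.rpow_intCast, Int.cast_sub]
  refine ⟨fun n => Q n, K, lam, hK.le, hlam, fun n k x => ?_, fun n k x hkn => ?_,
    fun n k x hnk => ?_⟩
  · simpa [rescaledEvolution, hzpow] using hQ n k x
  · simpa [rescaledEvolution, hzpow] using hstable n k x (by exact_mod_cast hkn)
  · simpa [rescaledEvolution, hzpow] using hunstable n k x (by exact_mod_cast hnk)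

theorem dichotomy_of_rescaled_family_implies_resolvent_general (d : ℕ)
    -- the linear equation x' = A(t) x and its evolution family T(t,s)
    (T : ℝ → ℝ → Ed d →L[ℝ] Ed d)
    (hT_id : ∀ t, T t t = ContinuousLinearMap.id ℝ (Ed d))
    (hT_comp : ∀ t s r, (T t s).comp (T s r) = T t r)
    -- the family of norms ‖·‖_t = N t with its comparison constants
    (N : ℝ → Seminorm ℝ (Ed d))
    -- the norms at integer times, and the Banach space Y_∞
    (𝒩 : NormFamily d) (h𝒩 : ∀ n : ℤ, 𝒩.N n = N (n : ℝ))
    -- the bounded invertible operator 𝔸 on Y_∞, (𝔸 x)_n = A_{n-1} x_{n-1} = T(n,n-1) x_{n-1}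
    (𝔸 : Yinf 𝒩 →L[ℝ] Yinf 𝒩)
    (h𝔸 : ∀ (x : Yinf 𝒩) (n : ℤ),
      (𝔸 x).seq n = T (n : ℝ) ((n - 1 : ℤ) : ℝ) (x.seq (n - 1)))
    -- μ > 0 is such that T_μ(t,s) = μ^{-(t-s)} T(t,s) admits a strong
    -- exponential dichotomy with respect to the norms ‖·‖_t
    (μ : ℝ) (hμ : 0 < μ)
    (hdich : SEDfam d (fun t s x => Real.rpow μ (s - t) • T t s x) N) :
    -- then μ does not belong to the spectrum of 𝔸, i.e. μ·Id − 𝔸 is invertible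
    μ ∉ spectrum ℝ 𝔸 ∧
      IsUnit (algebraMap ℝ (Yinf 𝒩 →L[ℝ] Yinf 𝒩) μ - 𝔸) := by
  obtain ⟨P, K, lam, hdisc⟩ := hdich.hasDiscreteDichotomy_rescaledEvolution
  rw [show (fun n : ℤ => N n) = 𝒩.N from (funext h𝒩).symm] at hdisc
  have h𝕍 (x : Yinf 𝒩) (n : ℤ) :
      ((μ⁻¹ • 𝔸) x).seq n = rescaledEvolution μ T n (n - 1) (x.seq (n - 1)) := by
    simp [rescaledEvolution, h𝔸]
  have hfactor : algebraMap ℝ (Yinf 𝒩 →L[ℝ] Yinf 𝒩) μ - 𝔸 =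
      algebraMap ℝ (Yinf 𝒩 →L[ℝ] Yinf 𝒩) μ * (1 - μ⁻¹ • 𝔸) := by
    rw [Algebra.algebraMap_eq_smul_one, mul_sub, mul_one, smul_mul_assoc, one_mul, smul_smul,
      mul_inv_cancel₀ hμ.ne', one_smul]
  have hunit : IsUnit (algebraMap ℝ (Yinf 𝒩 →L[ℝ] Yinf 𝒩) μ - 𝔸) :=
    hfactor ▸ ((isUnit_iff_ne_zero.mpr hμ.ne').map _).mul
      (isUnit_one_sub_of_hasDiscreteDichotomy
        (isDiscreteEvolution_rescaledEvolution hμ.ne' hT_id hT_comp) hdisc _ h𝕍)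
  exact ⟨spectrum.notMem_iff.mpr hunit, hunit⟩

theorem dichotomy_of_rescaled_family_implies_resolvent (d : ℕ)
    -- the linear equation x' = A(t) x and its evolution family T(t,s)
    (A : ℝ → Ed d →L[ℝ] Ed d) (T : ℝ → ℝ → Ed d →L[ℝ] Ed d)
    (hT_id : ∀ t, T t t = ContinuousLinearMap.id ℝ (Ed d))
    (hT_comp : ∀ t s r, (T t s).comp (T s r) = T t r)
    (hT_deriv : ∀ s x t, HasDerivAt (fun τ => T τ s x) (A t (T t s x)) t)
    -- the family of norms ‖·‖_t = N t with its comparison constants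
    (N : ℝ → Seminorm ℝ (Ed d)) (C eps : ℝ) (hC : 0 < C) (heps : 0 ≤ eps)
    (hlowN : ∀ (t : ℝ) (x : Ed d), ‖x‖ ≤ N t x)
    (hupN : ∀ (t : ℝ) (x : Ed d), N t x ≤ C * Real.exp (eps * |t|) * ‖x‖)
    -- x' = A(t)x admits a strong exponential dichotomy w.r.t. the norms ‖·‖_t
    (hSED : SEDfam d (fun t s x => T t s x) N)
    -- the norms at integer times, and the Banach space Y_∞
    (𝒩 : NormFamily d) (h𝒩 : ∀ n : ℤ, 𝒩.N n = N (n : ℝ))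
    -- the bounded invertible operator 𝔸 on Y_∞, (𝔸 x)_n = A_{n-1} x_{n-1} = T(n,n-1) x_{n-1}
    (𝔸 : Yinf 𝒩 →L[ℝ] Yinf 𝒩) (h𝔸inv : IsUnit 𝔸)
    (h𝔸 : ∀ (x : Yinf 𝒩) (n : ℤ),
      (𝔸 x).seq n = T (n : ℝ) ((n - 1 : ℤ) : ℝ) (x.seq (n - 1)))
    -- μ > 0 is such that T_μ(t,s) = μ^{-(t-s)} T(t,s) admits a strong
    -- exponential dichotomy with respect to the norms ‖·‖_t
    (μ : ℝ) (hμ : 0 < μ)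
    (hdich : SEDfam d (fun t s x => Real.rpow μ (s - t) • T t s x) N) :
    -- then μ does not belong to the spectrum of 𝔸, i.e. μ·Id − 𝔸 is invertible
    μ ∉ spectrum ℝ 𝔸 ∧
      IsUnit (algebraMap ℝ (Yinf 𝒩 →L[ℝ] Yinf 𝒩) μ - 𝔸) :=
  dichotomy_of_rescaled_family_implies_resolvent_general d T hT_id hT_comp N 𝒩 h𝒩 𝔸 h𝔸 μ hμ hdich

end
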